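/- With A a self-adjoint endomorphism of an n-dimensional real inner product space and T_r its Newton transformations, tr(A² ∘ T_r) = (−1)^{r+1}(−S_1 S_{r+1} + (r + 2) S_{r+2}) for 0 ≤ r ≤ n−2. -/

import Mathlib

/-!
On the eigenvector `eᵢ` of `A` with eigenvalue `κᵢ`, the recursion defining `T_r` is the
recursion `S_{r+1} = S_{r+1}(κ̂ᵢ) + κᵢ S_r(κ̂ᵢ)` of the elementary symmetric functions of the
remaining eigenvalues `κ̂ᵢ`, so `T_r eᵢ = (-1)^r S_r(κ̂ᵢ) eᵢ`. Hence
`tr(A² T_r) = (-1)^r ∑ᵢ κᵢ² S_r(κ̂ᵢ)`, and writing `κᵢ² S_r(κ̂ᵢ) = κᵢ S_{r+1} - κᵢ S_{r+1}(κ̂ᵢ)`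
together with the counting identity `∑ᵢ κᵢ S_r(κ̂ᵢ) = (r + 1) S_{r+1}` gives the claim.
-/

/-- The `r`-th elementary symmetric function of `κ₁, …, κₙ`. -/
noncomputable def esymm {n : ℕ} (r : ℕ) (κ : Fin n → ℝ) : ℝ :=
  ∑ s ∈ Finset.univ.powersetCard r, ∏ i ∈ s, κ i

/-- The Newton transformations of an endomorphism `A` with respect to scalars `S r`. -/
noncomputable def newton {V : Type*} [AddCommGroup V] [Module ℝ V]
    (A : Module.End ℝ V) (S : ℕ → ℝ) : ℕ → Module.End ℝ V
  | 0 => 1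
  | r + 1 => ((-1 : ℝ) ^ (r + 1) * S (r + 1)) • (1 : Module.End ℝ V) + A * newton A S r

namespace Multiset

variable {R : Type*}

theorem esymm_cons_succ [CommSemiring R] (a : R) (s : Multiset R) (r : ℕ) :
    (a ::ₘ s).esymm (r + 1) = s.esymm (r + 1) + a * s.esymm r := by
  simp only [esymm, powersetCard_cons, map_add, sum_add, map_map, Function.comp_def, prod_cons,
    sum_map_mul_left]

theorem esymm_zero [CommSemiring R] (s : Multiset R) : s.esymm 0 = 1 := by
  simp [esymm, powersetCard_zero_left]

theorem esymm_one [CommSemiring R] (s : Multiset R) : s.esymm 1 = s.sum := by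
  simp [esymm, powersetCard_one]

theorem esymm_succ_of_mem [CommSemiring R] [DecidableEq R] {a : R} {s : Multiset R} (h : a ∈ s)
    (r : ℕ) : s.esymm (r + 1) = (s.erase a).esymm (r + 1) + a * (s.erase a).esymm r := by
  conv_lhs => rw [← cons_erase h]
  exact esymm_cons_succ a _ r

theorem sum_map_mul_esymm_erase [CommSemiring R] [DecidableEq R] (s : Multiset R) (r : ℕ) :
    (s.map fun a => a * (s.erase a).esymm r).sum = (r + 1) * s.esymm (r + 1) := by
  induction s using Multiset.induction generalizing r with
  | empty => simp [esymm, powersetCard_zero_right]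
  | cons b s ih =>
    cases r with
    | zero => simp [esymm_zero, esymm_one]
    | succ r =>
      have hcons : (s.map fun a => a * ((b ::ₘ s).erase a).esymm (r + 1)) =
          s.map fun a => a * (b ::ₘ s.erase a).esymm (r + 1) :=
        map_congr rfl fun a ha => by rw [erase_cons_tail_of_mem ha]
      simp only [map_cons, sum_cons, erase_cons_head, hcons, esymm_cons_succ, mul_add, sum_map_add,
        mul_left_comm _ b, sum_map_mul_left, ih]
      push_cast
      ring

theorem sum_map_sq_mul_esymm_erase [CommRing R] [DecidableEq R] (s : Multiset R) (r : ℕ) :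
    (s.map fun a => a ^ 2 * (s.erase a).esymm r).sum =
      s.sum * s.esymm (r + 1) - (r + 2) * s.esymm (r + 2) := by
  have hsplit : ∀ a ∈ s, a ^ 2 * (s.erase a).esymm r =
      a * s.esymm (r + 1) - a * (s.erase a).esymm (r + 1) := fun a ha => by
    rw [esymm_succ_of_mem ha]; ring
  rw [map_congr rfl hsplit, sum_map_sub, sum_map_mul_right, map_id', sum_map_mul_esymm_erase]
  push_cast; ring

end Multiset

theorem esymm_eq_esymm_map_univ {n : ℕ} (κ : Fin n → ℝ) (r : ℕ) :
    esymm r κ = (Finset.univ.val.map κ).esymm r :=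
  (Finset.esymm_map_val κ _ r).symm

theorem newton_apply_of_apply_eq_smul {V : Type*} [AddCommGroup V] [Module ℝ V]
    {A : Module.End ℝ V} {s : Multiset ℝ} {μ : ℝ} (hμ : μ ∈ s) {v : V} (hv : A v = μ • v)
    (r : ℕ) : newton A s.esymm r v = ((-1) ^ r * (s.erase μ).esymm r) • v := by
  induction r with
  | zero => simp [newton, Multiset.esymm_zero]
  | succ r ih =>
    rw [newton, LinearMap.add_apply, LinearMap.smul_apply, Module.End.one_apply,
      Module.End.mul_apply, ih, map_smul, hv, smul_smul, ← add_smul,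
      Multiset.esymm_succ_of_mem hμ]
    congr 1
    ring

theorem LinearMap.trace_eq_sum_of_apply_eq_smul {𝕜 E ι : Type*} [RCLike 𝕜]
    [NormedAddCommGroup E] [InnerProductSpace 𝕜 E] [Fintype ι]
    {T : E →ₗ[𝕜] E} (b : OrthonormalBasis ι 𝕜 E) {c : ι → 𝕜} (hT : ∀ i, T (b i) = c i • b i) :
    T.trace 𝕜 E = ∑ i, c i := by
  simp [T.trace_eq_sum_inner b, hT, inner_smul_right]

theorem trace_sq_comp_newton_general {V : Type*} [NormedAddCommGroup V] [InnerProductSpace ℝ V]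
    [FiniteDimensional ℝ V] {n : ℕ} (hn : Module.finrank ℝ V = n)
    {A : V →ₗ[ℝ] V} (hA : A.IsSymmetric) (r : ℕ) :
    LinearMap.trace ℝ V
        ((A : Module.End ℝ V) ^ 2 * newton A (fun k => esymm k (hA.eigenvalues hn)) r) =
      (-1 : ℝ) ^ (r + 1) *
        (-(esymm 1 (hA.eigenvalues hn)) * esymm (r + 1) (hA.eigenvalues hn) +
          ((r : ℝ) + 2) * esymm (r + 2) (hA.eigenvalues hn)) := by
  set κ := hA.eigenvalues hn
  set s := Finset.univ.val.map κ
  have hAb (i : Fin n) : A (hA.eigenvectorBasis hn i) = κ i • hA.eigenvectorBasis hn i :=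
    hA.apply_eigenvectorBasis hn i
  have hdiag (i : Fin n) : ((A : Module.End ℝ V) ^ 2 * newton A s.esymm r)
      (hA.eigenvectorBasis hn i) =
      (κ i ^ 2 * ((-1) ^ r * (s.erase (κ i)).esymm r)) • hA.eigenvectorBasis hn i := by
    rw [Module.End.mul_apply, newton_apply_of_apply_eq_smul (Multiset.mem_map_of_mem κ
      (Finset.mem_univ_val i)) (hAb i), map_smul, sq, Module.End.mul_apply, hAb, map_smul, hAb,
      smul_smul, smul_smul]
    congr 1
    ring
  simp only [esymm_eq_esymm_map_univ, Multiset.esymm_one]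
  rw [LinearMap.trace_eq_sum_of_apply_eq_smul _ hdiag]
  have hsum : ∑ i, κ i ^ 2 * ((-1) ^ r * (s.erase (κ i)).esymm r) =
      (-1) ^ r * (s.map fun a => a ^ 2 * (s.erase a).esymm r).sum := by
    rw [Finset.sum_eq_multiset_sum, Multiset.map_map, ← Multiset.sum_map_mul_left]
    exact congrArg _ (Multiset.map_congr rfl fun _ _ => by simp only [Function.comp_apply]; ring)
  rw [hsum, Multiset.sum_map_sq_mul_esymm_erase]
  ring

/-- `tr(A² ∘ T_r) = (-1)^{r+1} (-S_1 S_{r+1} + (r + 2) S_{r+2})` for `0 ≤ r ≤ n - 2`. -/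
theorem trace_sq_comp_newton {V : Type*} [NormedAddCommGroup V] [InnerProductSpace ℝ V]
    [FiniteDimensional ℝ V] {n : ℕ} (hn : Module.finrank ℝ V = n)
    {A : V →ₗ[ℝ] V} (hA : A.IsSymmetric) (r : ℕ) (hr : r + 2 ≤ n) :
    LinearMap.trace ℝ V
        ((A : Module.End ℝ V) ^ 2 * newton A (fun k => esymm k (hA.eigenvalues hn)) r) =
      (-1 : ℝ) ^ (r + 1) *
        (-(esymm 1 (hA.eigenvalues hn)) * esymm (r + 1) (hA.eigenvalues hn) +
          ((r : ℝ) + 2) * esymm (r + 2) (hA.eigenvalues hn)) :=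
  trace_sq_comp_newton_general hn hA r
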